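/- Let φ be a Horn formula without positive unit clauses. There is a bijection between the connected components of G(φ) and the maximal self-implicating sets of variables of φ that contain no restraint set; the set corresponding to a component is exactly the set of variables assigned 1 in the minimum solution of that component. -/

import Mathlib

def SatClause {n : ℕ} (a : Fin n → Bool) (c : List (Fin n × Bool)) : Prop :=
  ∃ l ∈ c, (if l.2 then a l.1 else !(a l.1)) = true

def IsHornClause {n : ℕ} (c : List (Fin n × Bool)) : Prop :=
  (c.filter (fun l => l.2)).length ≤ 1

def Reach {ι : Type*} [Fintype ι] (S : Set (ι → Bool)) : (ι → Bool) → (ι → Bool) → Prop :=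
  Relation.ReflTransGen (fun u v => u ∈ S ∧ v ∈ S ∧ hammingDist u v = 1)

/-- `x` is implied by the variable set `U`: setting all of `U` to 1 forces `x = 1`
in every solution. -/
def Implied {n : ℕ} (S : Set (Fin n → Bool)) (U : Finset (Fin n)) (x : Fin n) : Prop :=
  ∀ a ∈ S, (∀ u ∈ U, a u = true) → a x = true

/-- `U` is maximal self-implicating: every `x ∈ U` is implied by `U \ {x}`,
and `U = Imp(U)`. -/
def MaxSelfImplicating {n : ℕ} (S : Set (Fin n → Bool)) (U : Finset (Fin n)) : Prop :=
  (∀ x ∈ U, Implied S (U.erase x) x) ∧ (∀ x, Implied S U x → x ∈ U)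

/-- `U` contains no restraint set (variable set of a clause with only negative literals). -/
def NoRestraintSet {n : ℕ} (φ : List (List (Fin n × Bool))) (U : Finset (Fin n)) : Prop :=
  ∀ c ∈ φ, (∀ l ∈ c, l.2 = false) → ¬ (∀ l ∈ c, l.1 ∈ U)

/-!
In a Horn formula the solution set is closed under pointwise conjunction. Hence a solution `m`
from which no single `1` can be flipped to `0` is the minimum of its component: walking away
from `m`, the first step that would drop a `1` of `m` would put `m ⊓ b = update m j false` into
the solution set. Such locally minimal solutions exist in every component by descent, and the
`1`-set of each is self-implicating for the same reason. Conversely, the indicator of a maximal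
self-implicating set `U` without restraint set is a solution (a violated clause would either have
its positive variable implied by `U`, or be a restraint clause inside `U`), and along any path
the variables of `U` stay `1` because each is implied by the others.
-/

open Function

def Solutions {n : ℕ} (φ : List (List (Fin n × Bool))) : Set (Fin n → Bool) :=
  {a | ∀ c ∈ φ, SatClause a c}

def componentMins {ι : Type*} [Fintype ι] (S : Set (ι → Bool)) : Set (ι → Bool) :=
  {m | m ∈ S ∧ ∀ b ∈ S, Reach S m b → m ≤ b}

def IsLocallyMinimal {ι : Type*} [DecidableEq ι] (S : Set (ι → Bool)) (m : ι → Bool) : Prop :=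
  ∀ j, m j = true → update m j false ∉ S

section Clauses

variable {n : ℕ} {a b : Fin n → Bool} {c : List (Fin n × Bool)}

theorem satClause_iff : SatClause a c ↔ ∃ l ∈ c, a l.1 = l.2 := by
  unfold SatClause
  refine exists_congr fun l => and_congr_right fun _ => ?_
  cases l.2 <;> simp

theorem IsHornClause.eq_of_snd_eq_true (hc : IsHornClause c) {l l' : Fin n × Bool}
    (hl : l ∈ c) (hl' : l' ∈ c) (h : l.2 = true) (h' : l'.2 = true) : l = l' := by
  have m : l ∈ c.filter (·.2) := List.mem_filter.mpr ⟨hl, h⟩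
  have m' : l' ∈ c.filter (·.2) := List.mem_filter.mpr ⟨hl', h'⟩
  unfold IsHornClause at hc
  rcases hfl : c.filter (·.2) with _ | ⟨x, _ | ⟨y, t⟩⟩
  · simp [hfl] at m
  · simp only [hfl, List.mem_singleton] at m m'
    rw [m, m']
  · simp [hfl] at hc

theorem IsHornClause.satClause_inf (hc : IsHornClause c) (ha : SatClause a c)
    (hb : SatClause b c) : SatClause (a ⊓ b) c := by
  rw [satClause_iff] at ha hb ⊢
  obtain ⟨l, hl, hal⟩ := ha
  obtain ⟨l', hl', hbl'⟩ := hb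
  cases h : l.2
  · exact ⟨l, hl, by simp [h, h ▸ hal]⟩
  cases h' : l'.2
  · exact ⟨l', hl', by simp [h', h' ▸ hbl']⟩
  obtain rfl := hc.eq_of_snd_eq_true hl hl' h h'
  exact ⟨l, hl, by simp [hal, hbl', h]⟩

theorem IsHornClause.implied_of_snd_eq_true {φ : List (List (Fin n × Bool))} (hcφ : c ∈ φ)
    (hc : IsHornClause c) {U : Finset (Fin n)} (hU : ∀ l ∈ c, l.2 = false → l.1 ∈ U)
    {l₀ : Fin n × Bool} (hl₀ : l₀ ∈ c) (h₀ : l₀.2 = true) : Implied (Solutions φ) U l₀.1 := by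
  intro a ha haU
  obtain ⟨l, hl, hal⟩ := satClause_iff.mp (ha c hcφ)
  cases h : l.2
  · rw [haU l.1 (hU l hl h), h] at hal
    cases hal
  · rw [← hc.eq_of_snd_eq_true hl hl₀ h h₀, hal, h]

end Clauses

theorem infClosed_solutions {n : ℕ} {φ : List (List (Fin n × Bool))}
    (hHorn : ∀ c ∈ φ, IsHornClause c) : InfClosed (Solutions φ) :=
  fun _ ha _ hb c hc => (hHorn c hc).satClause_inf (ha c hc) (hb c hc)

section BooleanCube

variable {ι : Type*} {S : Set (ι → Bool)}

theorem exists_forall_ne_eq_of_hammingDist_eq_one [Fintype ι] {β : Type*} [DecidableEq β]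
    {u v : ι → β} (h : hammingDist u v = 1) : ∃ j, ∀ i ≠ j, u i = v i := by
  obtain ⟨j, hj⟩ := Finset.card_eq_one.mp h
  refine ⟨j, fun i hi => ?_⟩
  by_contra hne
  have : i ∈ Finset.univ.filter (fun i => u i ≠ v i) := by simpa using hne
  exact hi (Finset.mem_singleton.mp (hj ▸ this))

theorem hammingDist_update_of_ne [Fintype ι] [DecidableEq ι] {β : Type*} [DecidableEq β]
    {a : ι → β} {j : ι} {x : β} (h : a j ≠ x) : hammingDist a (update a j x) = 1 := by
  refine Finset.card_eq_one.mpr ⟨j, Finset.ext fun i => ?_⟩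
  by_cases hi : i = j
  · subst hi; simp [h]
  · simp [hi]

theorem Reach.symm [Fintype ι] {a b : ι → Bool} (h : Reach S a b) : Reach S b a := by
  have : Std.Symm (fun u v : ι → Bool => u ∈ S ∧ v ∈ S ∧ hammingDist u v = 1) :=
    ⟨fun _ _ ⟨hu, hv, hd⟩ => ⟨hv, hu, by rwa [hammingDist_comm]⟩⟩
  exact Relation.ReflTransGen.stdSymm.symm _ _ h

theorem inf_eq_update_of_forall_ne_le [DecidableEq ι] {m c : ι → Bool} {j : ι}
    (h : ∀ i ≠ j, m i ≤ c i) (hc : c j = false) : m ⊓ c = update m j false := by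
  funext i
  by_cases hi : i = j
  · subst hi; simp [hc]
  · rw [update_of_ne hi, Pi.inf_apply, inf_eq_left.mpr (h i hi)]

theorem IsLocallyMinimal.le_of_forall_ne_le [DecidableEq ι] (hS : InfClosed S) {m c : ι → Bool}
    (hm : IsLocallyMinimal S m) (hmS : m ∈ S) (hcS : c ∈ S) {j : ι} (h : ∀ i ≠ j, m i ≤ c i) :
    m ≤ c := by
  intro i
  by_cases hi : i = j
  · subst hi
    cases hc : c i
    · cases hmi : m i
      · exact le_rfl
      · exact absurd (inf_eq_update_of_forall_ne_le h hc ▸ hS hmS hcS) (hm i hmi)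
    · exact le_top
  · exact h i hi

theorem IsLocallyMinimal.le_of_reach [Fintype ι] [DecidableEq ι] (hS : InfClosed S)
    {m b : ι → Bool} (hm : IsLocallyMinimal S m) (hmS : m ∈ S) (hr : Reach S m b) : m ≤ b := by
  induction hr with
  | refl => exact le_rfl
  | tail _ hstep ih =>
    obtain ⟨-, hcS, hd⟩ := hstep
    obtain ⟨j, hj⟩ := exists_forall_ne_eq_of_hammingDist_eq_one hd
    exact hm.le_of_forall_ne_le hS hmS hcS fun i hi => hj i hi ▸ ih i

theorem mem_componentMins_of_isLocallyMinimal [Fintype ι] [DecidableEq ι] (hS : InfClosed S)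
    {m : ι → Bool} (hmS : m ∈ S) (hm : IsLocallyMinimal S m) : m ∈ componentMins S :=
  ⟨hmS, fun _ _ => hm.le_of_reach hS hmS⟩

theorem isLocallyMinimal_of_mem_componentMins [Fintype ι] [DecidableEq ι] {m : ι → Bool}
    (hm : m ∈ componentMins S) : IsLocallyMinimal S m := by
  intro j hj hjS
  have hne : m j ≠ false := by simp [hj]
  have := hm.2 _ hjS (.single ⟨hm.1, hjS, hammingDist_update_of_ne hne⟩) j hj
  simp at this

theorem exists_reach_isLocallyMinimal [Fintype ι] [DecidableEq ι] {a : ι → Bool} (ha : a ∈ S) :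
    ∃ m ∈ S, Reach S a m ∧ IsLocallyMinimal S m := by
  induction a using WellFoundedLT.induction with
  | _ a ih =>
  by_cases hloc : IsLocallyMinimal S a
  · exact ⟨a, ha, .refl, hloc⟩
  obtain ⟨j, hj, hjS⟩ : ∃ j, a j = true ∧ update a j false ∈ S := by
    simpa [IsLocallyMinimal] using hloc
  have hlt : update a j false < a := update_lt_self_iff.mpr (by simp [hj])
  obtain ⟨m, hmS, hr, hm⟩ := ih _ hlt hjS
  have hne : a j ≠ false := by simp [hj]
  exact ⟨m, hmS, .head ⟨ha, hjS, hammingDist_update_of_ne hne⟩ hr, hm⟩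

theorem eq_of_mem_componentMins_of_reach [Fintype ι] {m m' : ι → Bool}
    (hm : m ∈ componentMins S) (hm' : m' ∈ componentMins S) (hr : Reach S m m') : m = m' :=
  le_antisymm (hm.2 m' hm'.1 hr) (hm'.2 m hm.1 hr.symm)

end BooleanCube

section SelfImplicating

variable {n : ℕ} {S : Set (Fin n → Bool)}

theorem maxSelfImplicating_ones (hS : InfClosed S) {m : Fin n → Bool}
    (hm : m ∈ componentMins S) :
    MaxSelfImplicating S (Finset.univ.filter (fun i => m i = true)) := by
  refine ⟨fun x hx a ha haU => ?_, fun x hx => ?_⟩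
  · have hle : ∀ i ≠ x, m i ≤ a i := fun i hi => by
      cases hmi : m i
      · exact bot_le
      · exact (haU i (by simp [hi, hmi])).ge
    exact (isLocallyMinimal_of_mem_componentMins hm).le_of_forall_ne_le hS hm.1 ha hle x
      (Finset.mem_filter.mp hx).2
  · simpa using hx m hm.1 fun u hu => (Finset.mem_filter.mp hu).2

theorem Reach.forall_mem_eq_true {U : Finset (Fin n)} (hU : ∀ x ∈ U, Implied S (U.erase x) x)
    {a b : Fin n → Bool} (hr : Reach S a b) (ha : ∀ u ∈ U, a u = true) : ∀ u ∈ U, b u = true := by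
  induction hr with
  | refl => exact ha
  | @tail b c _ hstep ih =>
    obtain ⟨-, hcS, hd⟩ := hstep
    obtain ⟨j, hj⟩ := exists_forall_ne_eq_of_hammingDist_eq_one hd
    intro u hu
    by_cases huj : u = j
    · subst huj
      exact hU u hu c hcS fun v hv =>
        hj v (Finset.ne_of_mem_erase hv) ▸ ih v (Finset.mem_of_mem_erase hv)
    · exact hj u huj ▸ ih u hu

theorem indicator_mem_componentMins {U : Finset (Fin n)} (hU : ∀ x ∈ U, Implied S (U.erase x) x)
    (hUS : (fun i => decide (i ∈ U)) ∈ S) : (fun i => decide (i ∈ U)) ∈ componentMins S := by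
  refine ⟨hUS, fun b _ hr i => ?_⟩
  by_cases hi : i ∈ U
  · simp [hr.forall_mem_eq_true hU (by simp) i hi]
  · simp [hi]

end SelfImplicating

section RestraintSets

variable {n : ℕ} {φ : List (List (Fin n × Bool))}

theorem noRestraintSet_ones {m : Fin n → Bool} (hm : m ∈ Solutions φ) :
    NoRestraintSet φ (Finset.univ.filter (fun i => m i = true)) := by
  intro c hc hneg hall
  obtain ⟨l, hl, hml⟩ := satClause_iff.mp (hm c hc)
  rw [hneg l hl, (Finset.mem_filter.mp (hall l hl)).2] at hml
  cases hml

theorem indicator_mem_solutions (hHorn : ∀ c ∈ φ, IsHornClause c) {U : Finset (Fin n)}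
    (hU : ∀ x, Implied (Solutions φ) U x → x ∈ U) (hNR : NoRestraintSet φ U) :
    (fun i => decide (i ∈ U)) ∈ Solutions φ := by
  intro c hc
  by_contra hns
  have hlit : ∀ l ∈ c, decide (l.1 ∈ U) ≠ l.2 := by
    simpa [satClause_iff] using hns
  have hneg : ∀ l ∈ c, l.2 = false → l.1 ∈ U := fun l hl h => by
    simpa [h] using hlit l hl
  by_cases hpos : ∃ l ∈ c, l.2 = true
  · obtain ⟨l₀, hl₀, h₀⟩ := hpos
    exact hlit l₀ hl₀ (by simp [h₀, hU _ ((hHorn c hc).implied_of_snd_eq_true hc hneg hl₀ h₀)])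
  · have hall : ∀ l ∈ c, l.2 = false := by simpa using hpos
    exact hNR c hc hall fun l hl => hneg l hl (hall l hl)

end RestraintSets

theorem horn_components_biject_with_max_self_implicating_sets_general (n : ℕ)
    (φ : List (List (Fin n × Bool)))
    (hHorn : ∀ c ∈ φ, IsHornClause c) :
    let S : Set (Fin n → Bool) := {a | ∀ c ∈ φ, SatClause a c}
    let Min : Set (Fin n → Bool) := {m | m ∈ S ∧ ∀ b ∈ S, Reach S m b → m ≤ b}
    -- every component contains a (necessarily unique) minimum solution
    (∀ a ∈ S, ∃ m ∈ Min, Reach S a m) ∧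
    (∀ m ∈ Min, ∀ m' ∈ Min, Reach S m m' → m = m') ∧
    -- the 1-set of the minimum of each component is maximal self-implicating
    -- and contains no restraint set
    (∀ m ∈ Min, MaxSelfImplicating S (Finset.univ.filter (fun i => m i = true)) ∧
      NoRestraintSet φ (Finset.univ.filter (fun i => m i = true))) ∧
    -- conversely, every such set arises this way (surjectivity of the correspondence)
    (∀ U : Finset (Fin n), MaxSelfImplicating S U → NoRestraintSet φ U →
      (fun i => decide (i ∈ U)) ∈ Min) := by
  intro S Min
  have hS : InfClosed (Solutions φ) := infClosed_solutions hHorn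
  refine ⟨fun a ha => ?_, fun m hm m' hm' => eq_of_mem_componentMins_of_reach hm hm',
    fun m hm => ⟨maxSelfImplicating_ones hS hm, noRestraintSet_ones hm.1⟩,
    fun U hU hNR => indicator_mem_componentMins hU.1 (indicator_mem_solutions hHorn hU.2 hNR)⟩
  obtain ⟨m, hmS, ham, hm⟩ := exists_reach_isLocallyMinimal ha
  exact ⟨m, mem_componentMins_of_isLocallyMinimal hS hmS hm, ham⟩

theorem horn_components_biject_with_max_self_implicating_sets (n : ℕ)
    (φ : List (List (Fin n × Bool)))
    (hHorn : ∀ c ∈ φ, IsHornClause c)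
    (hNoPosUnit : ∀ c ∈ φ, ∀ i : Fin n, c ≠ [(i, true)]) :
    let S : Set (Fin n → Bool) := {a | ∀ c ∈ φ, SatClause a c}
    let Min : Set (Fin n → Bool) := {m | m ∈ S ∧ ∀ b ∈ S, Reach S m b → m ≤ b}
    -- every component contains a (necessarily unique) minimum solution
    (∀ a ∈ S, ∃ m ∈ Min, Reach S a m) ∧
    (∀ m ∈ Min, ∀ m' ∈ Min, Reach S m m' → m = m') ∧
    -- the 1-set of the minimum of each component is maximal self-implicating
    -- and contains no restraint set
    (∀ m ∈ Min, MaxSelfImplicating S (Finset.univ.filter (fun i => m i = true)) ∧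
      NoRestraintSet φ (Finset.univ.filter (fun i => m i = true))) ∧
    -- conversely, every such set arises this way (surjectivity of the correspondence)
    (∀ U : Finset (Fin n), MaxSelfImplicating S U → NoRestraintSet φ U →
      (fun i => decide (i ∈ U)) ∈ Min) :=
  horn_components_biject_with_max_self_implicating_sets_general n φ hHorn
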